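/- Let f : ℝ^n → ℝ^n, g : ℝ^n → ℝ^{n×m}, and μ : ℝ^n → ℝ^m. Then f(x) + g(x)μ(x) ∈ T_D(x) holds for all x ∈ ∂D if and only if for all x ∈ ∂D there exists S ∈ S(x) such that: (W̄_{i-1}(S) W_{ij})·(f(x) + g(x)μ(x)) ≥ 0 for all (i,j) ∈ T(x) with j ∈ S_i; (W̄_{i-1}(S) W_{ij})·(f(x) + g(x)μ(x)) ≤ 0 for all (i,j) ∈ T(x) with j ∉ S_i; and W̄(S)·(f(x) + g(x)μ(x)) ≥ 0 (with the convention that W̄_0(S) is the n × n identity matrix). -/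

import Mathlib

/-- A feedforward ReLU network with `L` layers. `d 0` is the input dimension `n`;
`d i` is the width `M_i` of layer `i` for `1 ≤ i ≤ L`. `W i j : Fin (d i) → ℝ` is the
weight vector of neuron `j` in layer `i+1` (paper layer `i+1`), `r i j` its bias,
`Ω` the output weights and `ψ` the output bias. -/
structure ReluNet where
  L : ℕ
  hL : 1 ≤ L
  d : ℕ → ℕ
  W : (i : ℕ) → Fin (d (i + 1)) → Fin (d i) → ℝ
  r : (i : ℕ) → Fin (d (i + 1)) → ℝ
  Ω : Fin (d L) → ℝ
  ψ : ℝ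

namespace ReluNet

open Classical

/-- Layer outputs: `z N i x` is the output vector of paper layer `i` (`z N 0 x = x`). -/
def z (N : ReluNet) : (i : ℕ) → (Fin (N.d 0) → ℝ) → Fin (N.d i) → ℝ
  | 0, x => x
  | i + 1, x => fun j => max 0 ((∑ k, N.W i j k * z N i x k) + N.r i j)

/-- Pre-activation input of neuron `(i+1, j)` (paper indexing) at input `x`. -/
def pre (N : ReluNet) (i : ℕ) (j : Fin (N.d (i + 1))) (x : Fin (N.d 0) → ℝ) : ℝ :=
  (∑ k, N.W i j k * N.z i x k) + N.r i j

/-- The network output `b(x) = Ω ⬝ z_L(x) + ψ`. -/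
def b (N : ReluNet) (x : Fin (N.d 0) → ℝ) : ℝ :=
  (∑ j, N.Ω j * N.z N.L x j) + N.ψ

/-- An activation set: a set of neurons in each layer (`S i` lives in paper layer `i+1`). -/
abbrev ActSet (N : ReluNet) := (i : ℕ) → Set (Fin (N.d (i + 1)))

/-- The activation region `X̄(S)`: inputs whose pre-activation at neuron `(i,j)` is `≥ 0`
for `j ∈ S_i` and `≤ 0` for `j ∉ S_i`. -/
def region (N : ReluNet) (S : N.ActSet) : Set (Fin (N.d 0) → ℝ) :=
  {x | ∀ i < N.L, ∀ j : Fin (N.d (i + 1)),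
      (j ∈ S i → 0 ≤ N.pre i j x) ∧ (j ∉ S i → N.pre i j x ≤ 0)}

/-- `Wbar N S i j` is the column `W̄_{ij}(S) ∈ ℝ^n` (paper layer `i`); `Wbar N S 0` is the
identity matrix convention `W̄_0(S) = I`. -/
noncomputable def Wbar (N : ReluNet) (S : N.ActSet) : (i : ℕ) → Fin (N.d i) → Fin (N.d 0) → ℝ
  | 0, j => fun k => if k = j then 1 else 0
  | i + 1, j =>
      if j ∈ S i then (fun k => ∑ j', N.W i j j' * Wbar N S i j' k) else 0

/-- `rbar N S i j` is `r̄_{ij}(S)` (paper layer `i`); `rbar N S 0 = 0` by convention. -/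
noncomputable def rbar (N : ReluNet) (S : N.ActSet) : (i : ℕ) → Fin (N.d i) → ℝ
  | 0, _ => 0
  | i + 1, j =>
      if j ∈ S i then (∑ j', N.W i j j' * rbar N S i j') + N.r i j else 0

/-- `W̄(S) = W̄_L(S) Ω ∈ ℝ^n`. -/
noncomputable def WbarOut (N : ReluNet) (S : N.ActSet) : Fin (N.d 0) → ℝ :=
  fun k => ∑ j, N.Ω j * N.Wbar S N.L j k

/-- `r̄(S) = Ω ⬝ r̄_L(S) + ψ`. -/
noncomputable def rbarOut (N : ReluNet) (S : N.ActSet) : ℝ :=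
  (∑ j, N.Ω j * N.rbar S N.L j) + N.ψ

/-- `gradW N S i j = W̄_i(S) W_{(i+1)j} ∈ ℝ^n` (paper: `W̄_{i-1}(S) W_{ij}` for neuron
`(i,j)` with `i = ` my `i+1`). -/
noncomputable def gradW (N : ReluNet) (S : N.ActSet) (i : ℕ) (j : Fin (N.d (i + 1))) :
    Fin (N.d 0) → ℝ :=
  fun k => ∑ j', N.W i j j' * N.Wbar S i j' k

end ReluNet

/-- Euclidean distance from a point to a set in `ℝ^n` (it is `0` for the empty set,
matching the convention of `Metric.infDist`). -/
noncomputable def eInfDist {n : ℕ} (x : Fin n → ℝ) (A : Set (Fin n → ℝ)) : ℝ :=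
  sInf ((fun y => Real.sqrt (∑ k, (x k - y k) ^ 2)) '' A)

/-- The tangent cone `T_A(x) = {z : liminf_{τ→0⁺} dist(x + τz, A)/τ = 0}`, with `dist`
the Euclidean distance from a point to a set. -/
noncomputable def tangentCone {n : ℕ} (A : Set (Fin n → ℝ)) (x : Fin n → ℝ) :
    Set (Fin n → ℝ) :=
  {z | Filter.liminf (fun τ : ℝ => eInfDist (x + τ • z) A / τ)
        (nhdsWithin 0 (Set.Ioi 0)) = 0}

/-!
On each activation region `X̄(S)` the network is affine: the pre-activation of neuron `(i, j)`
is `(W̄_{i-1}(S) W_{ij}) · x + const` and `b x = W̄(S) · x + r̄(S)`. The regions are closed and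
finitely many of them cover `ℝⁿ` (only the layers below `L` matter), so a tangent direction `v`
to `D` at `x` is tangent to `D ∩ X̄(S)` for one `S`, and then `x ∈ X̄(S)`. On `D ∩ X̄(S)` the
point `x` minimises `b` and the vanishing pre-activations of neurons in `S`, and maximises those
of neurons outside `S`; Fermat's rule for these affine functions gives the sign conditions.
Conversely, under the sign conditions the ray `x + τ v` stays in `X̄(S)` for small `τ > 0`,
which is checked layer by layer because the affine formula for a layer holds only once the
lower layers follow `S`; there `b (x + τ v) = τ W̄(S) · v ≥ 0`, so the ray stays in `D`.
-/

open Filter Set Metric Matrix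
open scoped Topology NNReal

theorem tangentConeAt_iUnion_subset {R E ι : Type*} [AddCommGroup E] [SMul R E]
    [TopologicalSpace E] [Finite ι] {s : ι → Set E} {x : E} :
    tangentConeAt R (⋃ i, s i) x ⊆ ⋃ i, tangentConeAt R (s i) x := by
  intro y hy
  obtain ⟨α, l, hl, c, d, hd₀, hds, hcd⟩ := exists_fun_of_mem_tangentConeAt hy
  obtain ⟨i, hi⟩ := frequently_exists.1 (hds.mono fun n hn => mem_iUnion.1 hn).frequently
  exact mem_iUnion.2 ⟨i, mem_tangentConeAt_of_frequently l c d hd₀ hi hcd⟩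

theorem dotProduct_nonneg_of_mem_posTangentConeAt {ι : Type*} [Fintype ι] {s : Set (ι → ℝ)}
    {x v w : ι → ℝ} (hv : v ∈ posTangentConeAt s x) (h : ∀ y ∈ s, 0 ≤ w ⬝ᵥ (y - x)) :
    0 ≤ w ⬝ᵥ v := by
  have hmin : IsLocalMinOn (fun y => w ⬝ᵥ (y - x)) s x :=
    eventually_nhdsWithin_of_forall fun y hy => by simpa using h y hy
  let ℓ : (ι → ℝ) →L[ℝ] ℝ := LinearMap.toContinuousLinearMap (dotProductBilin ℝ ℝ w)
  have hℓ : HasFDerivWithinAt (fun y => w ⬝ᵥ (y - x)) ℓ s x := by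
    simpa [ℓ, dotProduct_sub] using ℓ.hasFDerivWithinAt.sub_const (w ⬝ᵥ x)
  simpa [ℓ] using hmin.hasFDerivWithinAt_nonneg hℓ hv

theorem mem_posTangentConeAt_of_frequently_infDist_lt {E : Type*} [NormedAddCommGroup E]
    [NormedSpace ℝ E] {A : Set E} {x v : E} (hx : x ∈ A)
    (h : ∀ ε > 0, ∃ᶠ τ in 𝓝[>] (0 : ℝ), infDist (x + τ • v) A < ε * τ) :
    v ∈ posTangentConeAt A x := by
  have hε (m : ℕ) : (0 : ℝ) < 1 / (m + 1) := Nat.one_div_pos_of_nat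
  have approx (m : ℕ) : ∃ τ ∈ Ioo 0 (1 / (m + 1 : ℝ)), ∃ y ∈ A,
      dist (x + τ • v) y < 1 / (m + 1) * τ := by
    obtain ⟨τ, hd, hτ⟩ := ((h _ (hε m)).and_eventually (Ioo_mem_nhdsGT (hε m))).exists
    exact ⟨τ, hτ, (infDist_lt_iff ⟨x, hx⟩).1 hd⟩
  choose τ hτ y hyA hy using approx
  have hτ₀ : Tendsto τ atTop (𝓝 0) :=
    squeeze_zero (fun m => (hτ m).1.le) (fun m => (hτ m).2.le)
      tendsto_one_div_add_atTop_nhds_zero_nat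
  have hcd : Tendsto (fun m => (τ m)⁻¹ • (y m - x)) atTop (𝓝 v) := by
    rw [tendsto_iff_norm_sub_tendsto_zero]
    refine squeeze_zero (fun _ => norm_nonneg _) (fun m => ?_)
      tendsto_one_div_add_atTop_nhds_zero_nat
    have hτm := (hτ m).1
    rw [← inv_smul_smul₀ hτm.ne' v, ← smul_sub, norm_smul, norm_inv, Real.norm_of_nonneg hτm.le,
      inv_mul_le_iff₀ hτm, ← dist_eq_norm, ← dist_add_left x, add_sub_cancel, mul_comm]
    exact (dist_comm _ _).trans_le (hy m).le
  refine mem_tangentConeAt_of_seq atTop (fun m => ⟨(τ m)⁻¹, (inv_pos.2 (hτ m).1).le⟩)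
    (fun m => y m - x) ?_ (.of_forall fun m => by simpa using hyA m) hcd
  have := hτ₀.smul hcd
  rw [zero_smul] at this
  refine this.congr fun m => ?_
  rw [smul_inv_smul₀ (hτ m).1.ne']

section EuclideanDistance

variable {n : ℕ} {A : Set (Fin n → ℝ)} {p x v : Fin n → ℝ}

lemma eInfDist_le_of_mem {y : Fin n → ℝ} (hy : y ∈ A) :
    eInfDist p A ≤ √(∑ k, (p k - y k) ^ 2) :=
  csInf_le ⟨0, forall_mem_image.2 fun _ _ => Real.sqrt_nonneg _⟩ (mem_image_of_mem _ hy)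

lemma eInfDist_eq_zero_of_mem (hp : p ∈ A) : eInfDist p A = 0 :=
  le_antisymm (by simpa using eInfDist_le_of_mem (p := p) hp)
    (Real.sInf_nonneg (forall_mem_image.2 fun _ _ => Real.sqrt_nonneg _))

-- `Metric.infDist` on `Fin n → ℝ` is taken for the sup distance, below the Euclidean one.
lemma infDist_le_eInfDist : infDist p A ≤ eInfDist p A := by
  rcases A.eq_empty_or_nonempty with rfl | hA
  · simp [eInfDist]
  refine le_csInf (hA.image _) (forall_mem_image.2 fun y hy =>
    (infDist_le_dist_of_mem hy).trans ?_)
  refine (dist_pi_le_iff (Real.sqrt_nonneg _)).2 fun k => ?_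
  rw [Real.dist_eq]
  exact Real.abs_le_sqrt (Finset.single_le_sum (f := fun k => (p k - y k) ^ 2)
    (fun _ _ => sq_nonneg _) (Finset.mem_univ k))

lemma eInfDist_add_smul_le (hx : x ∈ A) {τ : ℝ} (hτ : 0 ≤ τ) :
    eInfDist (x + τ • v) A ≤ τ * √(∑ k, v k ^ 2) := by
  refine (eInfDist_le_of_mem hx).trans_eq ?_
  simp only [Pi.add_apply, Pi.smul_apply, smul_eq_mul, add_sub_cancel_left, mul_pow,
    ← Finset.mul_sum]
  rw [Real.sqrt_mul (sq_nonneg τ), Real.sqrt_sq hτ]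

lemma frequently_infDist_lt_of_mem_tangentCone (hx : x ∈ A) (hv : v ∈ tangentCone A x)
    {ε : ℝ} (hε : 0 < ε) : ∃ᶠ τ in 𝓝[>] (0 : ℝ), infDist (x + τ • v) A < ε * τ := by
  have hcob : IsCoboundedUnder (· ≥ ·) (𝓝[>] (0 : ℝ)) fun τ => eInfDist (x + τ • v) A / τ :=
    isCoboundedUnder_ge_of_eventually_le _ <| eventually_nhdsWithin_of_forall
      fun τ (hτ : 0 < τ) => (div_le_iff₀ hτ).2 <|
        (eInfDist_add_smul_le hx hτ.le).trans_eq (mul_comm _ _)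
  refine (frequently_lt_of_liminf_lt hcob (hv.symm ▸ hε)).mp
    (eventually_nhdsWithin_of_forall fun τ (hτ : 0 < τ) h => ?_)
  exact infDist_le_eInfDist.trans_lt ((div_lt_iff₀ hτ).1 h)

lemma mem_posTangentConeAt_of_mem_tangentCone (hx : x ∈ A) (hv : v ∈ tangentCone A x) :
    v ∈ posTangentConeAt A x :=
  mem_posTangentConeAt_of_frequently_infDist_lt hx fun _ hε =>
    frequently_infDist_lt_of_mem_tangentCone hx hv hε

lemma mem_tangentCone_of_eventually_mem (h : ∀ᶠ τ in 𝓝[>] (0 : ℝ), x + τ • v ∈ A) :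
    v ∈ tangentCone A x := by
  show liminf _ _ = 0
  rw [liminf_congr (h.mono fun τ hτ => by rw [eInfDist_eq_zero_of_mem hτ, zero_div]),
    liminf_const]

end EuclideanDistance

lemma eventually_nonneg_add_mul {a c : ℝ} (ha : 0 ≤ a) (hc : a = 0 → 0 ≤ c) :
    ∀ᶠ τ in 𝓝[>] (0 : ℝ), 0 ≤ a + τ * c := by
  rcases ha.eq_or_lt with rfl | ha
  · exact eventually_nhdsWithin_of_forall fun τ (hτ : 0 < τ) => by
      simpa using mul_nonneg hτ.le (hc rfl)
  · have hlim : Tendsto (fun τ : ℝ => a + τ * c) (𝓝 0) (𝓝 (a + 0 * c)) :=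
      tendsto_const_nhds.add (tendsto_id.mul_const c)
    rw [zero_mul, add_zero] at hlim
    exact nhdsWithin_le_nhds ((hlim.eventually (lt_mem_nhds ha)).mono fun _ => le_of_lt)

lemma eventually_add_mul_nonpos {a c : ℝ} (ha : a ≤ 0) (hc : a = 0 → c ≤ 0) :
    ∀ᶠ τ in 𝓝[>] (0 : ℝ), a + τ * c ≤ 0 :=
  (eventually_nonneg_add_mul (neg_nonneg.2 ha) fun h => neg_nonneg.2 (hc (neg_eq_zero.1 h))).mono
    fun τ h => by linarith

namespace ReluNet

variable (N : ReluNet)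

lemma continuous_z (i : ℕ) : Continuous (N.z i) := by
  induction i with
  | zero => exact continuous_id
  | succ i ih => exact continuous_pi fun j => by simp only [z]; fun_prop

lemma continuous_pre (i : ℕ) (j : Fin (N.d (i + 1))) : Continuous (N.pre i j) := by
  have := N.continuous_z i
  unfold pre; fun_prop

lemma continuous_b : Continuous N.b := by
  have := N.continuous_z N.L
  unfold b; fun_prop

variable {N} {S : N.ActSet} {i l : ℕ} {x y : Fin (N.d 0) → ℝ}

def layerRegion (S : N.ActSet) (i : ℕ) : Set (Fin (N.d 0) → ℝ) :=
  {x | ∀ j, (j ∈ S i → 0 ≤ N.pre i j x) ∧ (j ∉ S i → N.pre i j x ≤ 0)}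

def regionUpTo (S : N.ActSet) (l : ℕ) : Set (Fin (N.d 0) → ℝ) :=
  {x | ∀ i < l, x ∈ N.layerRegion S i}

lemma region_eq_regionUpTo : N.region S = N.regionUpTo S N.L := rfl

lemma regionUpTo_antitone (h : i ≤ l) : N.regionUpTo S l ⊆ N.regionUpTo S i :=
  fun _ hx i' hi' => hx i' (hi'.trans_le h)

lemma regionUpTo_succ : N.regionUpTo S (l + 1) = N.regionUpTo S l ∩ N.layerRegion S l := by
  ext x
  simp only [regionUpTo, mem_ofPred_eq, mem_inter_iff, Nat.lt_succ_iff_lt_or_eq, or_imp,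
    forall_and, forall_eq]

lemma isClosed_layerRegion : IsClosed (N.layerRegion S i) := by
  rw [layerRegion, ofPred_forall]
  refine isClosed_iInter fun j => ?_
  by_cases hj : j ∈ S i
  · simpa [hj] using isClosed_le continuous_const (N.continuous_pre i j)
  · simpa [hj] using isClosed_le (N.continuous_pre i j) continuous_const

lemma isClosed_region : IsClosed (N.region S) := by
  simp only [region_eq_regionUpTo, regionUpTo, ofPred_forall]
  exact isClosed_iInter fun i => isClosed_iInter fun _ => isClosed_layerRegion

lemma pre_eq_of_z_eq (hz : N.z i x = of (N.Wbar S i) *ᵥ x + N.rbar S i) (j : Fin (N.d (i + 1))) :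
    N.pre i j x = N.gradW S i j ⬝ᵥ x + (N.W i j ⬝ᵥ N.rbar S i + N.r i j) := by
  change N.W i j ⬝ᵥ N.z i x + N.r i j = _
  rw [hz, dotProduct_add, dotProduct_mulVec, add_assoc]
  rfl

lemma z_eq_of_mem_regionUpTo (hx : x ∈ N.regionUpTo S i) :
    N.z i x = of (N.Wbar S i) *ᵥ x + N.rbar S i := by
  induction i with
  | zero => ext j; simp [z, Wbar, rbar, mulVec, dotProduct]
  | succ i ih =>
    have hpre := pre_eq_of_z_eq (ih (regionUpTo_antitone i.le_succ hx))
    ext j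
    change max 0 (N.pre i j x) = _
    by_cases hj : j ∈ S i
    · rw [max_eq_right ((hx i i.lt_succ_self j).1 hj), hpre]
      simp only [Wbar, rbar, Pi.add_apply, mulVec, of_apply, if_pos hj]
      rfl
    · rw [max_eq_left ((hx i i.lt_succ_self j).2 hj)]
      simp [mulVec, Wbar, rbar, hj]

lemma pre_sub_pre (hx : x ∈ N.regionUpTo S i) (hy : y ∈ N.regionUpTo S i)
    (j : Fin (N.d (i + 1))) : N.pre i j y - N.pre i j x = N.gradW S i j ⬝ᵥ (y - x) := by
  rw [pre_eq_of_z_eq (z_eq_of_mem_regionUpTo hx), pre_eq_of_z_eq (z_eq_of_mem_regionUpTo hy),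
    dotProduct_sub]
  ring

lemma b_eq_of_mem_region (hx : x ∈ N.region S) : N.b x = N.WbarOut S ⬝ᵥ x + N.rbarOut S := by
  change N.Ω ⬝ᵥ N.z N.L x + N.ψ = _
  rw [z_eq_of_mem_regionUpTo hx, dotProduct_add, dotProduct_mulVec, add_assoc]
  rfl

lemma b_sub_b (hx : x ∈ N.region S) (hy : y ∈ N.region S) :
    N.b y - N.b x = N.WbarOut S ⬝ᵥ (y - x) := by
  rw [b_eq_of_mem_region hx, b_eq_of_mem_region hy, dotProduct_sub]
  ring

variable {v : Fin (N.d 0) → ℝ}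

-- Activation sets that are empty from layer `L` on: finitely many, yet they cover the input
-- space because `region` only looks at the layers below `L`.
def ofPattern (P : (i : Fin N.L) → Set (Fin (N.d (i + 1)))) : N.ActSet :=
  fun i => if h : i < N.L then P ⟨i, h⟩ else ∅

lemma iUnion_region_ofPattern : ⋃ P, N.region (N.ofPattern P) = univ := by
  refine eq_univ_of_forall fun y => mem_iUnion.2 ⟨fun i => {j | 0 ≤ N.pre i j y}, fun i hi j => ?_⟩
  simp only [ofPattern, dif_pos hi, mem_ofPred_eq]
  exact ⟨id, fun h => (not_le.1 h).le⟩

def TangentCondition (S : N.ActSet) (x v : Fin (N.d 0) → ℝ) : Prop :=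
  x ∈ N.region S ∧
    (∀ i < N.L, ∀ j, N.pre i j x = 0 → j ∈ S i → 0 ≤ N.gradW S i j ⬝ᵥ v) ∧
    (∀ i < N.L, ∀ j, N.pre i j x = 0 → j ∉ S i → N.gradW S i j ⬝ᵥ v ≤ 0) ∧
    0 ≤ N.WbarOut S ⬝ᵥ v

theorem exists_tangentCondition_of_mem_tangentCone (hx : N.b x = 0)
    (hv : v ∈ tangentCone {y | 0 ≤ N.b y} x) : ∃ S, N.TangentCondition S x v := by
  set D := {y | 0 ≤ N.b y}
  have hv' := mem_posTangentConeAt_of_mem_tangentCone (A := D) hx.ge hv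
  rw [← inter_univ D, ← iUnion_region_ofPattern, inter_iUnion] at hv'
  obtain ⟨P, hP⟩ := mem_iUnion.1 (tangentConeAt_iUnion_subset hv')
  set S := N.ofPattern P
  have hxS : x ∈ N.region S := isClosed_region.closure_subset
    (closure_mono inter_subset_right (mem_closure_of_nonempty_tangentConeAt ⟨v, hP⟩))
  refine ⟨S, hxS, fun i hi j hj₀ hj => ?_, fun i hi j hj₀ hj => ?_, ?_⟩
  · refine dotProduct_nonneg_of_mem_posTangentConeAt hP fun y hy => ?_
    rw [← pre_sub_pre (regionUpTo_antitone hi.le hxS) (regionUpTo_antitone hi.le hy.2), hj₀,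
      sub_zero]
    exact (hy.2 i hi j).1 hj
  · suffices 0 ≤ -N.gradW S i j ⬝ᵥ v by rwa [neg_dotProduct, neg_nonneg] at this
    refine dotProduct_nonneg_of_mem_posTangentConeAt hP fun y hy => ?_
    rw [neg_dotProduct, ← pre_sub_pre (regionUpTo_antitone hi.le hxS)
      (regionUpTo_antitone hi.le hy.2), hj₀, sub_zero, neg_nonneg]
    exact (hy.2 i hi j).2 hj
  · refine dotProduct_nonneg_of_mem_posTangentConeAt hP fun y hy => ?_
    rw [← b_sub_b hxS hy.2, hx, sub_zero]
    exact hy.1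

lemma eventually_add_smul_mem_regionUpTo (h : N.TangentCondition S x v) :
    ∀ l ≤ N.L, ∀ᶠ τ in 𝓝[>] (0 : ℝ), x + τ • v ∈ N.regionUpTo S l := by
  obtain ⟨hxS, hin, hout, -⟩ := h
  intro l
  induction l with
  | zero => exact fun _ => .of_forall fun _ i hi => absurd hi (Nat.not_lt_zero i)
  | succ l ih =>
    intro hl
    have hsign (j : Fin (N.d (l + 1))) : ∀ᶠ τ in 𝓝[>] (0 : ℝ),
        (j ∈ S l → 0 ≤ N.pre l j x + τ * (N.gradW S l j ⬝ᵥ v)) ∧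
        (j ∉ S l → N.pre l j x + τ * (N.gradW S l j ⬝ᵥ v) ≤ 0) := by
      by_cases hj : j ∈ S l
      · simpa [hj] using eventually_nonneg_add_mul ((hxS l hl j).1 hj) (hin l hl j · hj)
      · simpa [hj] using eventually_add_mul_nonpos ((hxS l hl j).2 hj) (hout l hl j · hj)
    filter_upwards [ih (Nat.le_of_succ_le hl), eventually_all.2 hsign] with τ hτ hτsign
    rw [regionUpTo_succ]
    refine ⟨hτ, fun j => ?_⟩
    have hpre := pre_sub_pre (regionUpTo_antitone (Nat.le_of_succ_le hl) hxS) hτ j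
    rw [add_sub_cancel_left, dotProduct_smul, smul_eq_mul] at hpre
    rw [eq_add_of_sub_eq' hpre]
    exact hτsign j

theorem mem_tangentCone_of_tangentCondition (hx : N.b x = 0) (h : N.TangentCondition S x v) :
    v ∈ tangentCone {y | 0 ≤ N.b y} x := by
  refine mem_tangentCone_of_eventually_mem ?_
  filter_upwards [eventually_add_smul_mem_regionUpTo h N.L le_rfl, self_mem_nhdsWithin]
    with τ hτ (hτ₀ : 0 < τ)
  have hb := b_sub_b h.1 hτ
  rw [add_sub_cancel_left, dotProduct_smul, smul_eq_mul, hx, sub_zero] at hb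
  exact hb ▸ mul_nonneg hτ₀.le h.2.2.2

theorem mem_tangentCone_iff (hx : N.b x = 0) :
    v ∈ tangentCone {y | 0 ≤ N.b y} x ↔ ∃ S, N.TangentCondition S x v :=
  ⟨exists_tangentCondition_of_mem_tangentCone hx,
    fun ⟨_, hS⟩ => mem_tangentCone_of_tangentCondition hx hS⟩

end ReluNet

open ReluNet in
/-- Lemma 2 / Nagumo tangency condition. For dynamics
`ẋ = f(x) + g(x) μ(x)`, the tangency condition `f(x) + g(x)μ(x) ∈ T_D(x)` holds at all
`x ∈ ∂D` iff at every `x ∈ ∂D` there is `S ∈ S(x)` with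
`(W̄_{i-1}(S) W_{ij})·(f(x)+g(x)μ(x)) ≥ 0` for `(i,j) ∈ T(x)` with `j ∈ S_i`,
`(W̄_{i-1}(S) W_{ij})·(f(x)+g(x)μ(x)) ≤ 0` for `(i,j) ∈ T(x)` with `j ∉ S_i`, and
`W̄(S)·(f(x)+g(x)μ(x)) ≥ 0`. -/
theorem stmt7 (N : ReluNet) {m : ℕ}
    (f : (Fin (N.d 0) → ℝ) → Fin (N.d 0) → ℝ)
    (g : (Fin (N.d 0) → ℝ) → Fin (N.d 0) → Fin m → ℝ)
    (μ : (Fin (N.d 0) → ℝ) → Fin m → ℝ) :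
    (∀ x ∈ frontier {y : Fin (N.d 0) → ℝ | 0 ≤ N.b y},
        (fun k => f x k + ∑ j, g x k j * μ x j) ∈
          tangentCone {y : Fin (N.d 0) → ℝ | 0 ≤ N.b y} x) ↔
      (∀ x ∈ frontier {y : Fin (N.d 0) → ℝ | 0 ≤ N.b y},
        ∃ S : N.ActSet, x ∈ N.region S ∧
          (∀ i < N.L, ∀ j : Fin (N.d (i + 1)), N.pre i j x = 0 → j ∈ S i →
              0 ≤ ∑ k, N.gradW S i j k * (f x k + ∑ j', g x k j' * μ x j')) ∧
          (∀ i < N.L, ∀ j : Fin (N.d (i + 1)), N.pre i j x = 0 → j ∉ S i →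
              (∑ k, N.gradW S i j k * (f x k + ∑ j', g x k j' * μ x j')) ≤ 0) ∧
          0 ≤ ∑ k, N.WbarOut S k * (f x k + ∑ j', g x k j' * μ x j')) :=
  forall₂_congr fun _ hx =>
    mem_tangentCone_iff (frontier_le_subset_eq continuous_const N.continuous_b hx).symm
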